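/- arXiv:1911.10483 — 8 statements merged into one kernel-verified Lean document; each statement's English description precedes it below -/
import Mathlib

section
/- Let F be a free group of finite rank n with n ≥ 2. If H is a maximal subgroup of F of infinite index, then H is not finitely generated (hence, by the Nielsen–Schreier theorem, H is a free group of countably infinite rank). -/
/-!
A finitely generated subgroup `H` of a free group is closed in the profinite topology
(M. Hall): given `g ∉ H`, let `S` be the finite set of cosets `sH` with `s` a suffix of the
reduced word of `g` or of a generator of `H`. Each generator of the free group acts on `S` as a
partial injection, which extends to a permutation of `S`; the resulting action of the free group
on `S` agrees with the action on `F ⧸ H` along these words, so the stabilizer of the coset `H`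
is a finite-index subgroup containing `H` but not `g`. For a maximal `H` this subgroup must be
`H` itself, which then has finite index.
-/

open Equiv

theorem Equiv.Perm.exists_perm_finset_extends {α : Type*} [DecidableEq α] (S : Finset α)
    (e : Perm α) :
    ∃ σ : Perm S, ∀ (x : α) (hx : x ∈ S) (hex : e x ∈ S), σ ⟨x, hx⟩ = ⟨e x, hex⟩ := by
  let e' : {x : S // e x ∈ S} ≃ {x : S // e.symm x ∈ S} :=
    { toFun := fun x => ⟨⟨e x, x.2⟩, by simp⟩
      invFun := fun x => ⟨⟨e.symm x, x.2⟩, by simp⟩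
      left_inv := fun x => by ext; simp
      right_inv := fun x => by ext; simp }
  exact ⟨e'.extendSubtype, fun x hx hex => e'.extendSubtype_apply_of_mem ⟨x, hx⟩ hex⟩

namespace FreeGroup

variable {α X : Type*} [MulAction (FreeGroup α) X]

theorem lift_mk_apply_eq_smul {S : Finset X} {σ : α → Perm S}
    (hσ : ∀ a (y : X) (hy : y ∈ S) (hay : of a • y ∈ S), σ a ⟨y, hy⟩ = ⟨of a • y, hay⟩)
    {x : X} (hx : x ∈ S) (l : List (α × Bool)) (hl : ∀ t ∈ l.tails, mk t • x ∈ S) :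
    (lift σ (mk l) ⟨x, hx⟩ : X) = mk l • x := by
  induction l with
  | nil => simp [← one_eq_mk]
  | cons p l ih =>
    obtain ⟨a, b⟩ := p
    have htail : ∀ t ∈ l.tails, mk t • x ∈ S := fun t ht => hl t (by simp [ht])
    have hl_mem : mk l • x ∈ S := htail l (List.mem_tails _ _ |>.2 (List.suffix_refl l))
    have hcons_mem : mk ((a, b) :: l) • x ∈ S := hl _ (by simp)
    have hsplit : (mk ((a, b) :: l) : FreeGroup α) = mk [(a, b)] * mk l := by
      rw [mul_mk]; rfl
    have ih' : lift σ (mk l) ⟨x, hx⟩ = ⟨mk l • x, hl_mem⟩ := Subtype.ext (ih htail)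
    rw [hsplit, mul_smul] at hcons_mem
    rw [hsplit, _root_.map_mul, Perm.mul_apply, ih', mul_smul]
    cases b with
    | true =>
      have : (mk [(a, true)] : FreeGroup α) = of a := rfl
      rw [this] at hcons_mem ⊢
      rw [lift_apply_of, hσ a _ hl_mem hcons_mem]
    | false =>
      have : (mk [(a, false)] : FreeGroup α) = (of a)⁻¹ := rfl
      rw [this] at hcons_mem ⊢
      have hinv : (σ a)⁻¹ ⟨mk l • x, hl_mem⟩ = ⟨(of a)⁻¹ • mk l • x, hcons_mem⟩ := by
        rw [Perm.inv_eq_iff_eq, hσ a _ hcons_mem (by simpa using hl_mem)]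
        simp
      rw [_root_.map_inv, lift_apply_of, hinv]

theorem exists_hom_perm_finset_apply_eq_smul (x : X) (W : Finset (FreeGroup α)) :
    ∃ (S : Finset X) (hx : x ∈ S) (φ : FreeGroup α →* Perm S),
      ∀ w ∈ W, (φ w ⟨x, hx⟩ : X) = w • x := by
  classical
  let S : Finset X := insert x (W.biUnion fun w => (w.toWord.tails.map (mk · • x)).toFinset)
  have hS : ∀ w ∈ W, ∀ t ∈ w.toWord.tails, mk t • x ∈ S := fun w hw t ht =>
    Finset.mem_insert_of_mem <| Finset.mem_biUnion.2
      ⟨w, hw, by simpa using ⟨t, (List.mem_tails _ _).1 ht, rfl⟩⟩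
  have hx : x ∈ S := Finset.mem_insert_self _ _
  choose σ hσ using fun a =>
    Perm.exists_perm_finset_extends S (MulAction.toPerm (of a : FreeGroup α))
  refine ⟨S, hx, lift σ, fun w hw => ?_⟩
  simpa only [mk_toWord] using lift_mk_apply_eq_smul hσ hx w.toWord (hS w hw)

end FreeGroup

theorem Subgroup.FG.exists_finiteIndex_le_notMem {α : Type*} {H : Subgroup (FreeGroup α)}
    (hH : H.FG) {g : FreeGroup α} (hg : g ∉ H) :
    ∃ K : Subgroup (FreeGroup α), H ≤ K ∧ g ∉ K ∧ K.FiniteIndex := by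
  obtain ⟨T, rfl⟩ := hH
  classical
  obtain ⟨S, hx, φ, hφ⟩ :=
    FreeGroup.exists_hom_perm_finset_apply_eq_smul ((1 : FreeGroup α) : FreeGroup α ⧸ closure T)
      (insert g T)
  let K := (MulAction.stabilizer (Perm S) (⟨_, hx⟩ : S)).comap φ
  have hK : ∀ w ∈ insert g T, w ∈ K ↔ w ∈ closure (T : Set (FreeGroup α)) := by
    intro w hw
    rw [← MulAction.stabilizer_quotient (closure (T : Set (FreeGroup α))),
      MulAction.mem_stabilizer_iff, ← hφ w hw, Subgroup.mem_comap, MulAction.mem_stabilizer_iff,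
      Subtype.ext_iff]
    rfl
  refine ⟨K, (closure_le K).2 fun t ht => ?_,
    fun hgK => hg ((hK g (Finset.mem_insert_self _ _)).1 hgK), finiteIndex_of_le (φ.ker_le_comap _)⟩
  exact (hK t (Finset.mem_insert_of_mem ht)).2 (subset_closure ht)

theorem maximal_infinite_index_subgroup_of_free_group_not_fg_general
    (n : ℕ) (H : Subgroup (FreeGroup (Fin n)))
    (hmax : IsCoatom H) (hinf : H.index = 0) : ¬ H.FG := by
  intro hFG
  obtain ⟨g, hg⟩ := SetLike.exists_not_mem_of_ne_top H hmax.1 rfl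
  obtain ⟨K, hHK, hgK, hK⟩ := hFG.exists_finiteIndex_le_notMem hg
  rcases hmax.le_iff.1 hHK with rfl | rfl
  · exact hgK (Subgroup.mem_top g)
  · exact hK.index_ne_zero hinf

/-- Every maximal subgroup of infinite index in a free group of finite rank `n ≥ 2`
is not finitely generated. -/
theorem maximal_infinite_index_subgroup_of_free_group_not_fg
    (n : ℕ) (hn : 2 ≤ n) (H : Subgroup (FreeGroup (Fin n)))
    (hmax : IsCoatom H) (hinf : H.index = 0) : ¬ H.FG :=
  maximal_infinite_index_subgroup_of_free_group_not_fg_general n H hmax hinf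
end

section
/- Let G be a nontrivial group. Then G is a simple group if and only if the diagonal subgroup Δ(G) = {(g, g) : g ∈ G} is a maximal subgroup of G × G. -/
/-!
Subgroups `K` of `G × G` containing the diagonal correspond to normal subgroups of `G`:
`K` is recovered from `N = {g | (g, 1) ∈ K}` as the set of pairs `(a, b)` with `a / b ∈ N`,
because `(a, b) = (a / b, 1) * (b, b)`; normality of `N` comes from conjugating by diagonal
elements. Under this correspondence the diagonal matches `⊥` and `⊤` matches `⊤`, so the
diagonal is maximal exactly when `⊥` and `⊤` are the only normal subgroups.
-/

namespace Subgroup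

variable {G : Type*} [Group G]

theorem graph_id_ne_top_iff : (MonoidHom.id G).graph ≠ ⊤ ↔ Nontrivial G := by
  simpa [eq_top_iff', MonoidHom.mem_graph] using _root_.nontrivial_iff.symm

def sameCoset (N : Subgroup G) [N.Normal] : Subgroup (G × G) :=
  (MonoidHom.id (G ⧸ N)).graph.comap ((QuotientGroup.mk' N).prodMap (QuotientGroup.mk' N))

theorem mem_sameCoset {N : Subgroup G} [N.Normal] {a b : G} :
    (a, b) ∈ sameCoset N ↔ a / b ∈ N :=
  QuotientGroup.eq_iff_div_mem

theorem graph_id_le_sameCoset (N : Subgroup G) [N.Normal] :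
    (MonoidHom.id G).graph ≤ sameCoset N := by
  rintro ⟨a, b⟩ (rfl : a = b)
  simp [mem_sameCoset]

theorem comap_inl_sameCoset (N : Subgroup G) [N.Normal] :
    (sameCoset N).comap (MonoidHom.inl G G) = N := by
  ext g
  simp [mem_sameCoset]

section

variable {K : Subgroup (G × G)} (hK : (MonoidHom.id G).graph ≤ K)
include hK

theorem normal_comap_inl_of_graph_id_le : (K.comap (MonoidHom.inl G G)).Normal where
  conj_mem n hn g := by
    have : (g, g) * (n, 1) * (g, g)⁻¹ ∈ K := mul_mem (mul_mem (hK rfl) hn) (inv_mem (hK rfl))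
    simpa using this

theorem mk_mem_iff_div_mem_comap_inl (a b : G) :
    (a, b) ∈ K ↔ a / b ∈ K.comap (MonoidHom.inl G G) := by
  have hab : (a, b) = (a / b, 1) * (b, b) := by simp
  rw [hab, mul_mem_cancel_right (hK rfl)]
  rfl

theorem comap_inl_eq_bot_iff : K.comap (MonoidHom.inl G G) = ⊥ ↔ K = (MonoidHom.id G).graph := by
  refine ⟨fun h => le_antisymm ?_ hK, fun h => ?_⟩
  · rintro ⟨a, b⟩ hab
    rwa [mk_mem_iff_div_mem_comap_inl hK, h, mem_bot, div_eq_one] at hab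
  · subst h
    ext g
    simp [MonoidHom.mem_graph]

theorem comap_inl_eq_top_iff : K.comap (MonoidHom.inl G G) = ⊤ ↔ K = ⊤ := by
  refine ⟨fun h => ?_, fun h => h ▸ comap_top _⟩
  rw [eq_top_iff']
  rintro ⟨a, b⟩
  simp [mk_mem_iff_div_mem_comap_inl hK, h]

end

end Subgroup

open Subgroup in
theorem isSimpleGroup_iff_diagonal_isCoatom_general {G : Type*} [Group G] :
    IsSimpleGroup G ↔ IsCoatom (((MonoidHom.id G).prod (MonoidHom.id G)).range) := by
  rw [← MonoidHom.graph_eq_range_prod]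
  constructor
  · intro hs
    refine ⟨graph_id_ne_top_iff.2 inferInstance, fun K hK => ?_⟩
    rcases hs.eq_bot_or_eq_top_of_normal _ (normal_comap_inl_of_graph_id_le hK.le) with h | h
    · exact absurd ((comap_inl_eq_bot_iff hK.le).1 h) hK.ne'
    · exact (comap_inl_eq_top_iff hK.le).1 h
  · intro h
    have := graph_id_ne_top_iff.1 h.1
    refine ⟨fun N hN => ?_⟩
    rw [← comap_inl_sameCoset N, comap_inl_eq_bot_iff (graph_id_le_sameCoset N),
      comap_inl_eq_top_iff (graph_id_le_sameCoset N)]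
    exact (h.le_iff.1 (graph_id_le_sameCoset N)).symm

/-- A nontrivial group `G` is simple iff the diagonal subgroup
`Δ(G) = {(g, g) : g ∈ G}` is a maximal subgroup of `G × G`. -/
theorem isSimpleGroup_iff_diagonal_isCoatom {G : Type*} [Group G] [Nontrivial G] :
    IsSimpleGroup G ↔ IsCoatom (((MonoidHom.id G).prod (MonoidHom.id G)).range) :=
  isSimpleGroup_iff_diagonal_isCoatom_general
end

section
/- Let G be an infinite group admitting a faithful, 2-transitive action on a set X. Then G is I.C.C., i.e., for every g ∈ G with g ≠ 1 the conjugacy class {kgk⁻¹ : k ∈ G} is infinite. -/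
/-!
A nontrivial `g` moves some point `a`, since the action is faithful. By 2-transitivity, for every
`c ≠ a` some `k` fixes `a` and sends `g • a` to `c`, so the conjugate `k * g * k⁻¹` sends `a` to
`c`. Hence the image of the conjugacy class of `g` under `h ↦ h • a` contains the complement of
`{a}`, which is infinite because a faithful action of an infinite group lives on an infinite set.
-/

/-- An action of `G` on `X` is `n`-transitive if `|X| ≥ n` and any injective
`n`-tuple of points of `X` can be mapped to any other by some element of `G`. -/
def IsMultiplyTransitive (G X : Type*) [Group G] [MulAction G X] (n : ℕ) : Prop :=
  (∃ f : Fin n → X, Function.Injective f) ∧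
    ∀ a b : Fin n → X, Function.Injective a → Function.Injective b →
      ∃ g : G, ∀ i, g • a i = b i

open MulAction

theorem IsMultiplyTransitive.isMultiplyPretransitive {G X : Type*} [Group G] [MulAction G X]
    {n : ℕ} (h : IsMultiplyTransitive G X n) : IsMultiplyPretransitive G X n where
  exists_smul_eq a b := by
    obtain ⟨g, hg⟩ := h.2 a b a.injective b.injective
    exact ⟨g, Function.Embedding.ext hg⟩

theorem MulAction.infinite_of_faithfulSMul (G X : Type*) [Group G] [Infinite G] [MulAction G X]
    [FaithfulSMul G X] : Infinite X :=
  not_finite_iff_infinite.mp fun _ ↦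
    have := Finite.of_injective _ (toPerm_injective (α := G) (β := X))
    not_finite G

theorem MulAction.exists_conj_smul_eq {G X : Type*} [Group G] [MulAction G X]
    [IsMultiplyPretransitive G X 2] {g : G} {a c : X} (ha : g • a ≠ a) (hc : c ≠ a) :
    ∃ k : G, (k * g * k⁻¹) • a = c := by
  obtain ⟨k, hka, hkga⟩ := is_two_pretransitive_iff.mp ‹_› ha.symm hc.symm
  refine ⟨k, ?_⟩
  rw [mul_smul, mul_smul, inv_smul_eq_iff.mpr hka.symm, hkga]

theorem MulAction.compl_singleton_subset_image_conj {G X : Type*} [Group G] [MulAction G X]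
    [IsMultiplyPretransitive G X 2] {g : G} {a : X} (ha : g • a ≠ a) :
    {a}ᶜ ⊆ (· • a) '' {x : G | ∃ k : G, k * g * k⁻¹ = x} := by
  intro c hc
  obtain ⟨k, hk⟩ := exists_conj_smul_eq ha hc
  exact ⟨_, ⟨k, rfl⟩, hk⟩

/-- An infinite group admitting a faithful, 2-transitive action is I.C.C.: every
nontrivial conjugacy class is infinite. -/
theorem icc_of_faithful_two_transitive
    {G X : Type*} [Group G] [Infinite G] [MulAction G X] [FaithfulSMul G X]
    (h2 : IsMultiplyTransitive G X 2) (g : G) (hg : g ≠ 1) :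
    {x : G | ∃ k : G, k * g * k⁻¹ = x}.Infinite := by
  have := h2.isMultiplyPretransitive
  have := infinite_of_faithfulSMul G X
  obtain ⟨a, ha⟩ : ∃ a : X, g • a ≠ a :=
    not_forall.mp fun h ↦ hg (eq_of_smul_eq_smul fun x : X ↦ by rw [h x, one_smul])
  exact Set.Infinite.of_image _
    ((Set.finite_singleton a).infinite_compl.mono (compl_singleton_subset_image_conj ha))
end

section
/- Let G act faithfully and 4-transitively on an infinite set X. Let x ∈ X, let g ∈ G with g • x ≠ x, set y = g⁻¹ • x, and let K = Stab(x) ∩ Stab(y). Let τ ∈ G with τ ≠ 1, and assume that τ does not act on X as the transposition of x and y (i.e., it is not the case that τ • x = y, τ • y = x, and τ • z = z for every z ∈ X with z ≠ x and z ≠ y). Then the set {tτt⁻¹ : t ∈ K} is infinite. -/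
/-!
`K = Stab(x) ∩ Stab(y)` is 2-transitive on `X \ {x, y}`. Since `τ` is neither trivial nor the
transposition of `x` and `y`, it moves some `z ∉ {x, y}`. Let `P := τ • z` if that lies in
`{x, y}`, and `P := z` otherwise. For every `u ∉ {x, y, z}` some `t ∈ K` sends `z ↦ u` (and
`τ • z ↦ z` in the second case), so that `t τ t⁻¹` sends `u ↦ P`. Conjugates sending infinitely
many points to the single point `P` must be infinitely many.
-/

open MulAction

section

variable {G X : Type*} [Group G] [MulAction G X]

theorem infinite_of_forall_exists_smul_eq {S : Set G} {U : Set X} (hU : U.Infinite) (P : X)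
    (h : ∀ u ∈ U, ∃ a ∈ S, a • u = P) : S.Infinite := by
  intro hS
  refine hU ((hS.image fun a => a⁻¹ • P).subset ?_)
  intro u hu
  obtain ⟨a, ha, rfl⟩ := h u hu
  exact ⟨a, ha, inv_smul_smul a u⟩

theorem exists_ne_ne_smul_ne [FaithfulSMul G X] {τ : G} {x y : X} (hτ : τ ≠ 1)
    (hswap : ¬ (τ • x = y ∧ τ • y = x ∧ ∀ z, z ≠ x → z ≠ y → τ • z = z)) :
    ∃ z, z ≠ x ∧ z ≠ y ∧ τ • z ≠ z := by
  by_contra! hfix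
  have hpair : ∀ p, τ • p ≠ p → τ • p = x ∨ τ • p = y := fun p hp => by
    by_contra! h
    exact hp (MulAction.injective τ (hfix _ h.1 h.2))
  by_cases hx : τ • x = x
  · have hy : τ • y = y := by
      by_contra hy
      rcases hpair y hy with h | h
      · exact hy (by rw [h]; exact (MulAction.injective τ (h.trans hx.symm)).symm)
      · exact hy h
    refine hτ (eq_of_smul_eq_smul (α := X) fun a => ?_)
    by_cases hax : a = x
    · rw [hax, hx, one_smul]
    by_cases hay : a = y
    · rw [hay, hy, one_smul]
    rw [hfix a hax hay, one_smul]
  · have hxy : τ • x = y := (hpair x hx).resolve_left hx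
    have hy : τ • y ≠ y := fun hy =>
      hx (by rw [hxy]; exact MulAction.injective τ (hy.trans hxy.symm))
    exact hswap ⟨hxy, (hpair y hy).resolve_right hy, hfix⟩

namespace IsMultiplyTransitive

variable (h4 : IsMultiplyTransitive G X 4) {x y : X} (hxy : x ≠ y)
include h4 hxy

theorem exists_mem_stabilizer_inf_smul_eq_smul_eq {c d c' d' : X}
    (hcx : c ≠ x) (hcy : c ≠ y) (hdx : d ≠ x) (hdy : d ≠ y) (hcd : c ≠ d)
    (hc'x : c' ≠ x) (hc'y : c' ≠ y) (hd'x : d' ≠ x) (hd'y : d' ≠ y) (hc'd' : c' ≠ d') :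
    ∃ t ∈ stabilizer G x ⊓ stabilizer G y, t • c = c' ∧ t • d = d' := by
  obtain ⟨t, ht⟩ := h4.2 ![x, y, c, d] ![x, y, c', d']
    (by intro i j; fin_cases i <;> fin_cases j <;> simp_all [eq_comm])
    (by intro i j; fin_cases i <;> fin_cases j <;> simp_all [eq_comm])
  exact ⟨t, Subgroup.mem_inf.mpr ⟨ht 0, ht 1⟩, ht 2, ht 3⟩

theorem exists_mem_stabilizer_inf_smul_eq [Infinite X] {c c' : X}
    (hcx : c ≠ x) (hcy : c ≠ y) (hc'x : c' ≠ x) (hc'y : c' ≠ y) :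
    ∃ t ∈ stabilizer G x ⊓ stabilizer G y, t • c = c' := by
  obtain ⟨d, hd⟩ := (Set.toFinite {x, y, c}).infinite_compl.nonempty
  obtain ⟨d', hd'⟩ := (Set.toFinite {x, y, c'}).infinite_compl.nonempty
  simp only [Set.mem_compl_iff, Set.mem_insert_iff, Set.mem_singleton_iff, not_or] at hd hd'
  obtain ⟨t, ht, htc, -⟩ := h4.exists_mem_stabilizer_inf_smul_eq_smul_eq hxy hcx hcy hd.1 hd.2.1
    (Ne.symm hd.2.2) hc'x hc'y hd'.1 hd'.2.1 (Ne.symm hd'.2.2)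
  exact ⟨t, ht, htc⟩

theorem exists_forall_conj_smul_eq [Infinite X] {τ : G} {z : X}
    (hzx : z ≠ x) (hzy : z ≠ y) (hτz : τ • z ≠ z) :
    ∃ P : X, ∀ u, u ≠ x → u ≠ y → u ≠ z →
      ∃ t ∈ stabilizer G x ⊓ stabilizer G y, (t * τ * t⁻¹) • u = P := by
  by_cases hw : τ • z = x ∨ τ • z = y
  · refine ⟨τ • z, fun u hux huy _ => ?_⟩
    obtain ⟨t, ht, rfl⟩ := h4.exists_mem_stabilizer_inf_smul_eq hxy hzx hzy hux huy
    refine ⟨t, ht, ?_⟩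
    rw [mul_smul, mul_smul, inv_smul_smul]
    rcases hw with h | h <;> rw [h]
    exacts [(Subgroup.mem_inf.mp ht).1, (Subgroup.mem_inf.mp ht).2]
  · push Not at hw
    refine ⟨z, fun u hux huy huz => ?_⟩
    obtain ⟨t, ht, rfl, htw⟩ := h4.exists_mem_stabilizer_inf_smul_eq_smul_eq hxy hzx hzy hw.1
      hw.2 hτz.symm hux huy hzx hzy huz
    exact ⟨t, ht, by rw [mul_smul, mul_smul, inv_smul_smul, htw]⟩

end IsMultiplyTransitive

end

/-- For a faithful, 4-transitive action of `G` on an infinite set `X`, with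
`x ∈ X`, `g • x ≠ x`, `y = g⁻¹ • x`, and `K = Stab(x) ∩ Stab(y)`: if `τ ≠ 1` does
not act as the transposition of `x` and `y`, then the `K`-conjugates of `τ` form
an infinite set. -/
theorem infinite_conjugates_of_faithful_four_transitive
    {G X : Type*} [Group G] [MulAction G X] [FaithfulSMul G X] [Infinite X]
    (h4 : IsMultiplyTransitive G X 4) (x : X) (g : G) (hgx : g • x ≠ x)
    (τ : G) (hτ : τ ≠ 1)
    (hστ : ¬ (τ • x = g⁻¹ • x ∧ τ • (g⁻¹ • x) = x ∧
      ∀ z : X, z ≠ x → z ≠ g⁻¹ • x → τ • z = z)) :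
    {a : G | ∃ t ∈ MulAction.stabilizer G x ⊓ MulAction.stabilizer G (g⁻¹ • x),
      t * τ * t⁻¹ = a}.Infinite := by
  have hxy : x ≠ g⁻¹ • x := fun h => hgx (eq_inv_smul_iff.mp h)
  obtain ⟨z, hzx, hzy, hτz⟩ := exists_ne_ne_smul_ne hτ hστ
  obtain ⟨P, hP⟩ := h4.exists_forall_conj_smul_eq hxy hzx hzy hτz
  refine infinite_of_forall_exists_smul_eq (Set.toFinite {x, g⁻¹ • x, z}).infinite_compl P ?_
  intro u hu
  simp only [Set.mem_compl_iff, Set.mem_insert_iff, Set.mem_singleton_iff, not_or] at hu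
  obtain ⟨t, ht, htu⟩ := hP u hu.1 hu.2.1 hu.2.2
  exact ⟨_, ⟨t, ht, rfl⟩, htu⟩
end

section
/- Let G act faithfully and 4-transitively on an infinite set X, let x, y ∈ X with x ≠ y, and let K = Stab(x) ∩ Stab(y). Then for every τ ∈ K with τ ≠ 1, the set {tτt⁻¹ : t ∈ K} is infinite. -/
lemma injective_vecCons_four {X : Type*} {a b c d : X} (hab : a ≠ b) (hac : a ≠ c)
    (had : a ≠ d) (hbc : b ≠ c) (hbd : b ≠ d) (hcd : c ≠ d) :
    Function.Injective ![a, b, c, d] := by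
  intro i j h
  fin_cases i <;> fin_cases j <;> simp_all [eq_comm]

namespace IsMultiplyTransitive

variable {G X : Type*} [Group G] [MulAction G X]

lemma exists_fix_three_smul_eq (h4 : IsMultiplyTransitive G X 4) {x y z u w : X}
    (hxy : x ≠ y) (hxz : x ≠ z) (hyz : y ≠ z) (hu : u ∉ ({x, y, z} : Set X))
    (hw : w ∉ ({x, y, z} : Set X)) :
    ∃ t : G, t • x = x ∧ t • y = y ∧ t • z = z ∧ t • u = w := by
  simp only [Set.mem_insert_iff, Set.mem_singleton_iff, not_or] at hu hw
  obtain ⟨t, ht⟩ := h4.2 ![x, y, z, u] ![x, y, z, w]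
    (injective_vecCons_four hxy hxz (Ne.symm hu.1) hyz (Ne.symm hu.2.1) (Ne.symm hu.2.2))
    (injective_vecCons_four hxy hxz (Ne.symm hw.1) hyz (Ne.symm hw.2.1) (Ne.symm hw.2.2))
  exact ⟨t, ht 0, ht 1, ht 2, ht 3⟩

lemma compl_subset_image_conj_smul (h4 : IsMultiplyTransitive G X 4) {x y z : X} (hxy : x ≠ y)
    {τ : G} (hτK : τ ∈ MulAction.stabilizer G x ⊓ MulAction.stabilizer G y) (hz : τ • z ≠ z) :
    ({x, y, z} : Set X)ᶜ ⊆
      (· • z) '' {a : G | ∃ t ∈ MulAction.stabilizer G x ⊓ MulAction.stabilizer G y,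
        t * τ * t⁻¹ = a} := by
  obtain ⟨hτx, hτy⟩ : τ • x = x ∧ τ • y = y := hτK
  have hzx : z ≠ x := fun h => hz (h ▸ hτx)
  have hzy : z ≠ y := fun h => hz (h ▸ hτy)
  have hτz : τ • z ∉ ({x, y, z} : Set X) := by
    simp only [Set.mem_insert_iff, Set.mem_singleton_iff, not_or]
    exact ⟨fun h => hzx (smul_left_cancel τ (h.trans hτx.symm)),
      fun h => hzy (smul_left_cancel τ (h.trans hτy.symm)), hz⟩
  intro w hw
  obtain ⟨t, htx, hty, htz, htw⟩ :=
    h4.exists_fix_three_smul_eq hxy hzx.symm hzy.symm hτz hw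
  refine ⟨t * τ * t⁻¹, ⟨t, ⟨htx, hty⟩, rfl⟩, ?_⟩
  have htz' : t⁻¹ • z = z := inv_smul_eq_iff.mpr htz.symm
  simp only [mul_smul, htz', htw]

end IsMultiplyTransitive

/-- For a faithful, 4-transitive action of `G` on an infinite set `X` and distinct
points `x ≠ y` with `K = Stab(x) ∩ Stab(y)`, every nontrivial element of `K` has
infinitely many `K`-conjugates. -/
theorem two_point_stabilizer_icc_of_faithful_four_transitive
    {G X : Type*} [Group G] [MulAction G X] [FaithfulSMul G X] [Infinite X]
    (h4 : IsMultiplyTransitive G X 4) (x y : X) (hxy : x ≠ y)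
    (τ : G) (hτK : τ ∈ MulAction.stabilizer G x ⊓ MulAction.stabilizer G y)
    (hτ : τ ≠ 1) :
    {a : G | ∃ t ∈ MulAction.stabilizer G x ⊓ MulAction.stabilizer G y,
      t * τ * t⁻¹ = a}.Infinite := by
  obtain ⟨z, hz⟩ : ∃ z : X, τ • z ≠ z := by
    by_contra! hfix
    exact hτ (faithfulSMul_iff.mp ‹_› τ hfix)
  exact Set.Infinite.of_image (· • z) <|
    (Set.toFinite {x, y, z}).infinite_compl.mono (h4.compl_subset_image_conj_smul hxy hτK hz)
end

section
/- Let G act faithfully and 3-transitively on an infinite set X, and let x ∈ X. Then the stabilizer subgroup Stab(x) is relative I.C.C. in G; that is, for every g ∈ G with g ≠ 1, the set {hgh⁻¹ : h ∈ Stab(x)} is infinite. -/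
open MulAction

section

variable {G X : Type*} [Group G] [MulAction G X]

lemma injective_vecCons_three {a₀ a₁ a₂ : X} (h₀₁ : a₀ ≠ a₁) (h₀₂ : a₀ ≠ a₂) (h₁₂ : a₁ ≠ a₂) :
    Function.Injective ![a₀, a₁, a₂] := by
  intro i j hij
  fin_cases i <;> fin_cases j <;> simp_all

lemma IsMultiplyTransitive.exists_mem_stabilizer_inf_smul_eq_s10 (h3 : IsMultiplyTransitive G X 3)
    {p w q t : X} (hpw : p ≠ w) (hq : q ∉ ({p, w} : Set X)) (ht : t ∉ ({p, w} : Set X)) :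
    ∃ k ∈ stabilizer G p ⊓ stabilizer G w, k • q = t := by
  simp only [Set.mem_insert_iff, Set.mem_singleton_iff, not_or] at hq ht
  obtain ⟨k, hk⟩ := h3.2 ![p, w, q] ![p, w, t]
    (injective_vecCons_three hpw (Ne.symm hq.1) (Ne.symm hq.2))
    (injective_vecCons_three hpw (Ne.symm ht.1) (Ne.symm ht.2))
  exact ⟨k, ⟨by simpa using hk 0, by simpa using hk 1⟩, by simpa using hk 2⟩

lemma Subgroup.infinite_conj_of_infinite_smul_smul {H : Subgroup G} {g : G} {p : X} {S : Set X}
    (hS : S.Infinite) (hsurj : ∀ t ∈ S, ∃ k ∈ H, k • p = p ∧ k • g • p = t) :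
    {a : G | ∃ h ∈ H, h * g * h⁻¹ = a}.Infinite := by
  refine Set.Infinite.of_image (· • p) (hS.mono ?_)
  intro t ht
  obtain ⟨k, hkH, hkp, hkt⟩ := hsurj t ht
  have hkp' : k⁻¹ • p = p := by rw [inv_smul_eq_iff, hkp]
  exact ⟨k * g * k⁻¹, ⟨k, hkH, rfl⟩, by simp only [mul_smul, hkp', hkt]⟩

lemma exists_pair_mem_smul_notMem [FaithfulSMul G X] [Infinite X] (x : X) {g : G} (hg : g ≠ 1) :
    ∃ p w : X, x ∈ ({p, w} : Set X) ∧ p ≠ w ∧ g • p ∉ ({p, w} : Set X) := by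
  by_cases hgx : g • x = x
  · obtain ⟨y, hgy⟩ : ∃ y : X, g • y ≠ y := by
      by_contra! hfix
      exact hg (eq_of_smul_eq_smul (α := X) fun y => by rw [hfix y, one_smul])
    have hyx : y ≠ x := by rintro rfl; exact hgy hgx
    refine ⟨y, x, by simp, hyx, ?_⟩
    simp only [Set.mem_insert_iff, Set.mem_singleton_iff, not_or]
    exact ⟨hgy, fun h => hyx (smul_left_cancel g (h.trans hgx.symm))⟩
  · obtain ⟨w, hw⟩ := (Set.toFinite {x, g • x}).infinite_compl.nonempty
    simp only [Set.mem_compl_iff, Set.mem_insert_iff, Set.mem_singleton_iff, not_or] at hw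
    refine ⟨x, w, by simp, Ne.symm hw.1, ?_⟩
    simp only [Set.mem_insert_iff, Set.mem_singleton_iff, not_or]
    exact ⟨hgx, fun h => hw.2 h.symm⟩

end

/-- For a faithful, 3-transitive action of `G` on an infinite set `X`, the point
stabilizer `Stab(x)` is relative I.C.C. in `G`: every `g ≠ 1` has infinitely many
conjugates by elements of `Stab(x)`. -/
theorem stabilizer_relative_icc_of_faithful_three_transitive
    {G X : Type*} [Group G] [MulAction G X] [FaithfulSMul G X] [Infinite X]
    (h3 : IsMultiplyTransitive G X 3) (x : X) (g : G) (hg : g ≠ 1) :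
    {a : G | ∃ h ∈ MulAction.stabilizer G x, h * g * h⁻¹ = a}.Infinite := by
  obtain ⟨p, w, hx, hpw, hgp⟩ := exists_pair_mem_smul_notMem x hg
  have hstab : stabilizer G p ⊓ stabilizer G w ≤ stabilizer G x := by
    rcases hx with rfl | rfl
    exacts [inf_le_left, inf_le_right]
  refine Subgroup.infinite_conj_of_infinite_smul_smul (p := p)
    (Set.toFinite {p, w}).infinite_compl fun t ht => ?_
  obtain ⟨k, hk, hkt⟩ := h3.exists_mem_stabilizer_inf_smul_eq_s10 hpw hgp ht
  exact ⟨k, hstab hk, hk.1, hkt⟩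
end

section
/- Let G be a group with exactly two conjugacy classes, i.e., G is nontrivial and any two nontrivial elements of G are conjugate. Then the left-right shift action of G × G on G, given by (g, h) • x = g x h⁻¹, is 2-transitive: for any a₁, a₂ ∈ G with a₁ ≠ a₂ and any b₁, b₂ ∈ G with b₁ ≠ b₂, there exist g, h ∈ G with g a₁ h⁻¹ = b₁ and g a₂ h⁻¹ = b₂. -/
/-! Two pairs `(a₁, a₂)` and `(b₁, b₂)` lie in one orbit of the left-right shift action as soon as
the "differences" `a₁ * a₂⁻¹` and `b₁ * b₂⁻¹` are conjugate; for distinct pairs both differences are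
nontrivial, hence conjugate by assumption. -/

theorem exists_shift_eq_of_isConj {G : Type*} [Group G] {a₁ a₂ b₁ b₂ : G}
    (hab : IsConj (a₁ * a₂⁻¹) (b₁ * b₂⁻¹)) :
    ∃ g h : G, g * a₁ * h⁻¹ = b₁ ∧ g * a₂ * h⁻¹ = b₂ := by
  obtain ⟨k, hk⟩ := isConj_iff.1 hab
  refine ⟨k, b₁⁻¹ * (k * a₁), by group, ?_⟩
  calc k * a₂ * (b₁⁻¹ * (k * a₁))⁻¹ = (k * (a₁ * a₂⁻¹) * k⁻¹)⁻¹ * b₁ := by group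
    _ = b₂ := by rw [hk]; group

theorem left_right_shift_two_transitive_general
    {G : Type*} [Group G]
    (hconj : ∀ a b : G, a ≠ 1 → b ≠ 1 → ∃ k : G, k * a * k⁻¹ = b)
    (a₁ a₂ b₁ b₂ : G) (ha : a₁ ≠ a₂) (hb : b₁ ≠ b₂) :
    ∃ g h : G, g * a₁ * h⁻¹ = b₁ ∧ g * a₂ * h⁻¹ = b₂ :=
  exists_shift_eq_of_isConj <| isConj_iff.2 <|
    hconj _ _ (mul_inv_eq_one.not.2 ha) (mul_inv_eq_one.not.2 hb)

/-- If `G` is a nontrivial group in which any two nontrivial elements are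
conjugate, then the left-right shift action of `G × G` on `G` given by
`(g, h) • x = g * x * h⁻¹` is 2-transitive. -/
theorem left_right_shift_two_transitive
    {G : Type*} [Group G] [Nontrivial G]
    (hconj : ∀ a b : G, a ≠ 1 → b ≠ 1 → ∃ k : G, k * a * k⁻¹ = b)
    (a₁ a₂ b₁ b₂ : G) (ha : a₁ ≠ a₂) (hb : b₁ ≠ b₂) :
    ∃ g h : G, g * a₁ * h⁻¹ = b₁ ∧ g * a₂ * h⁻¹ = b₂ :=
  left_right_shift_two_transitive_general hconj a₁ a₂ b₁ b₂ ha hb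
end

section
/- Let G be a group, H a subgroup of infinite index in G, and g ∈ G. Assume G = H ∪ HgH, i.e., every element of G either lies in H or can be written h₁ g h₂ with h₁, h₂ ∈ H. Then there exists h ∈ H such that g h g ∈ HgH, i.e., g h g = h₁ g h₂ for some h₁, h₂ ∈ H. -/
/-! If no `g * h * g` lies in `HgH`, the covering `G = H ∪ HgH` forces `g * H * g ⊆ H`. Then
`g² ∈ H`, so `g⁻¹ H g = g⁻² (g H g) ⊆ H`, whence `HgH = gH` and `G = H ∪ gH`: the index of `H`
is at most two. -/

namespace Subgroup

variable {G : Type*} [Group G] {H : Subgroup G} {g : G}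

theorem index_ne_zero_of_forall_mem_or_inv_mul_mem (hcover : ∀ k : G, k ∈ H ∨ g⁻¹ * k ∈ H) :
    H.index ≠ 0 := by
  have : Finite (G ⧸ H) := by
    refine Finite.of_surjective (fun b : Bool => if b then ((g : G) : G ⧸ H) else ((1 : G) : G ⧸ H))
      fun x => ?_
    induction x using QuotientGroup.induction_on with
    | H k =>
      rcases hcover k with hk | hk
      · exact ⟨false, QuotientGroup.eq.mpr (by simpa using H.inv_mem hk)⟩
      · exact ⟨true, QuotientGroup.eq.mpr hk⟩
  exact index_ne_zero_of_finite

theorem inv_mul_mul_mem_of_forall_mul_mul_mem (hsq : ∀ h ∈ H, g * h * g ∈ H) {h : G}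
    (hh : h ∈ H) : g⁻¹ * h * g ∈ H := by
  have hg2 : g * g ∈ H := by simpa using hsq 1 H.one_mem
  have hmem := H.mul_mem (H.inv_mem hg2) (hsq h hh)
  convert hmem using 1
  group

theorem inv_mul_mul_mul_mem (hconj : ∀ h ∈ H, g⁻¹ * h * g ∈ H) {h₁ h₂ : G} (hh₁ : h₁ ∈ H)
    (hh₂ : h₂ ∈ H) : g⁻¹ * (h₁ * g * h₂) ∈ H := by
  have hmem := H.mul_mem (hconj h₁ hh₁) hh₂
  convert hmem using 1
  group

end Subgroup

/-- If `H` has infinite index in `G` and `G = H ∪ HgH`, then `g * h * g ∈ HgH`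
for some `h ∈ H`. -/
theorem exists_ghg_mem_doset
    {G : Type*} [Group G] (H : Subgroup G) (hinf : H.index = 0) (g : G)
    (hcover : ∀ k : G, k ∈ H ∨ ∃ h₁ ∈ H, ∃ h₂ ∈ H, k = h₁ * g * h₂) :
    ∃ h ∈ H, ∃ h₁ ∈ H, ∃ h₂ ∈ H, g * h * g = h₁ * g * h₂ := by
  by_contra! hnot
  have hsq : ∀ h ∈ H, g * h * g ∈ H := fun h hh =>
    (hcover (g * h * g)).resolve_right fun ⟨h₁, hh₁, h₂, hh₂, heq⟩ => hnot h hh h₁ hh₁ h₂ hh₂ heq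
  have hconj : ∀ h ∈ H, g⁻¹ * h * g ∈ H := fun _ => H.inv_mul_mul_mem_of_forall_mul_mul_mem hsq
  refine H.index_ne_zero_of_forall_mem_or_inv_mul_mem (g := g) (fun k => ?_) hinf
  rcases hcover k with hk | ⟨h₁, hh₁, h₂, hh₂, rfl⟩
  · exact Or.inl hk
  · exact Or.inr (H.inv_mul_mul_mul_mem hconj hh₁ hh₂)
end
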